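/- Let (φ_k)_{k≥1} be positive definite functions on a countable group G with φ_k(1) = 1 and φ_k ≥ 0 (real nonnegative valued), and suppose that for an exhausting increasing sequence of finite sets K_k ⊆ G one has |φ_k(g) - 1| ≤ 2^{-k-1} δ² for all g ∈ K_k. Then the infinite pointwise product φ(g) = ∏_{k=1}^∞ φ_k(g) converges for every g ∈ G, φ is positive definite with φ(1) = 1, φ ≥ 0, and |φ(g) - 1| ≤ δ²/2 for all g ∈ K_1. -/

import Mathlib

/-!
The kernel matrix `[φ (g_j⁻¹ g_i)]` of a pointwise product is the Hadamard product of the kernel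
matrices of the factors, so by the Schur product theorem every partial product `∏_{k ≤ j} φ_k` is
positive definite, and positive definiteness survives pointwise limits. Positive definiteness also
forces `φ_k(g) ≤ φ_k(1) = 1`, so the (real) partial products decrease in `[0, 1]` and converge.
On `K_1 ⊆ K_k` the bound comes from `‖∏ a_k - 1‖ ≤ ∑ ‖a_k - 1‖` for `‖a_k‖ ≤ 1` together with
`∑_{k ≥ 1} 2^(-k-1) = 1/2`.
-/

open scoped ComplexOrder

def IsPosDefFn {G : Type*} [Group G] (φ : G → ℂ) : Prop :=
  ∀ (n : ℕ) (g : Fin n → G) (c : Fin n → ℂ),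
    0 ≤ ∑ i, ∑ j, c i * (starRingEnd ℂ) (c j) * φ ((g j)⁻¹ * g i)

open Filter Topology Finset Matrix

-- Over `ℂ`, polarization makes a matrix with real nonnegative quadratic form Hermitian.
theorem Matrix.posSemidef_of_dotProduct_mulVec_nonneg {n : Type*} [Fintype n]
    {A : Matrix n n ℂ} (hA : ∀ x, 0 ≤ star x ⬝ᵥ A *ᵥ x) : A.PosSemidef := by
  classical
  rw [← isPositive_toEuclideanLin_iff, LinearMap.isPositive_iff_complex]
  intro x
  obtain ⟨hre, him⟩ := Complex.nonneg_iff.mp (hA x.ofLp)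
  have hself : star (star x.ofLp ⬝ᵥ A *ᵥ x.ofLp) = star x.ofLp ⬝ᵥ A *ᵥ x.ofLp :=
    Complex.conj_eq_iff_im.mpr him.symm
  rw [EuclideanSpace.inner_eq_star_dotProduct, toLpLin_apply, dotProduct_comm, star_dotProduct,
    hself]
  exact ⟨Complex.conj_eq_iff_re.mp hself, hre⟩

section PosDefFn

variable {G : Type*} [Group G] {φ ψ : G → ℂ}

def kernelMatrix (φ : G → ℂ) {n : ℕ} (g : Fin n → G) : Matrix (Fin n) (Fin n) ℂ :=
  Matrix.of fun i j => φ ((g j)⁻¹ * g i)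

theorem sum_sum_mul_conj_mul_eq_dotProduct_mulVec {n : ℕ} (g : Fin n → G) (c : Fin n → ℂ) :
    ∑ i, ∑ j, c i * (starRingEnd ℂ) (c j) * φ ((g j)⁻¹ * g i) =
      c ⬝ᵥ kernelMatrix φ g *ᵥ star c := by
  simp only [dotProduct, mulVec, kernelMatrix, of_apply, mul_sum, Pi.star_apply, Complex.star_def]
  exact sum_congr rfl fun i _ => sum_congr rfl fun j _ => by ring

theorem isPosDefFn_iff_posSemidef :
    IsPosDefFn φ ↔ ∀ (n : ℕ) (g : Fin n → G), (kernelMatrix φ g).PosSemidef := by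
  refine ⟨fun h n g => posSemidef_of_dotProduct_mulVec_nonneg fun x => ?_, fun h n g c => ?_⟩
  · simpa only [sum_sum_mul_conj_mul_eq_dotProduct_mulVec, star_star] using h n g (star x)
  · simpa only [sum_sum_mul_conj_mul_eq_dotProduct_mulVec, star_star] using
      (h n g).dotProduct_mulVec_nonneg (star c)

theorem isPosDefFn_one : IsPosDefFn (1 : G → ℂ) :=
  isPosDefFn_iff_posSemidef.mpr fun n g => by
    convert posSemidef_vecMulVec_self_star (1 : Fin n → ℂ) using 1
    ext i j
    simp [kernelMatrix, vecMulVec_apply]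

theorem IsPosDefFn.mul (hφ : IsPosDefFn φ) (hψ : IsPosDefFn ψ) : IsPosDefFn (φ * ψ) :=
  isPosDefFn_iff_posSemidef.mpr fun n g =>
    (isPosDefFn_iff_posSemidef.mp hφ n g).hadamard (isPosDefFn_iff_posSemidef.mp hψ n g)

theorem IsPosDefFn.prod {ι : Type*} (s : Finset ι) {φ : ι → G → ℂ}
    (h : ∀ i ∈ s, IsPosDefFn (φ i)) :
    IsPosDefFn (∏ i ∈ s, φ i) := by
  classical
  induction s using Finset.induction_on with
  | empty => simpa using isPosDefFn_one
  | insert a s ha ih =>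
    rw [prod_insert ha]
    exact (h a (mem_insert_self a s)).mul (ih fun i hi => h i (mem_insert_of_mem hi))

theorem IsPosDefFn.of_tendsto {ι : Type*} {l : Filter ι} [l.NeBot] {F : ι → G → ℂ}
    (hF : ∀ i, IsPosDefFn (F i)) (hlim : ∀ g, Tendsto (F · g) l (𝓝 (φ g))) : IsPosDefFn φ :=
  fun n g c => ge_of_tendsto'
    (tendsto_finsetSum _ fun _ _ => tendsto_finsetSum _ fun _ _ => (hlim _).const_mul _)
    fun k => hF k n g c

theorem IsPosDefFn.map_inv (h : IsPosDefFn φ) (g : G) : φ g⁻¹ = starRingEnd ℂ (φ g) := by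
  simpa [kernelMatrix] using ((isPosDefFn_iff_posSemidef.mp h 2 ![1, g]).isHermitian.apply 0 1).symm

theorem IsPosDefFn.re_le (h : IsPosDefFn φ) (g : G) : (φ g).re ≤ (φ 1).re := by
  have hquad : 0 ≤ (φ 1).re + -(φ g).re + (-(φ g).re + (φ 1).re) := by
    simpa [Fin.sum_univ_two, h.map_inv] using (Complex.nonneg_iff.mp (h 2 ![1, g] ![1, -1])).1
  linarith

theorem IsPosDefFn.mem_Icc_of_nonneg (h : IsPosDefFn φ) (h1 : φ 1 = 1) {g : G} (h0 : 0 ≤ φ g) :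
    φ g ∈ Set.Icc 0 1 := by
  refine ⟨h0, Complex.le_def.mpr ⟨?_, (Complex.nonneg_iff.mp h0).2.symm⟩⟩
  simpa [h1] using h.re_le g

end PosDefFn

theorem Finset.norm_prod_sub_one_le_sum_norm_sub_one {ι R : Type*} [SeminormedCommRing R]
    [NormOneClass R] (s : Finset ι) {f : ι → R} (hf : ∀ i ∈ s, ‖f i‖ ≤ 1) :
    ‖∏ i ∈ s, f i - 1‖ ≤ ∑ i ∈ s, ‖f i - 1‖ := by
  classical
  induction s using Finset.induction_on with
  | empty => simp
  | insert a s ha ih =>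
    rw [prod_insert ha, sum_insert ha]
    have hs := ih fun i hi => hf i (mem_insert_of_mem hi)
    calc ‖f a * ∏ i ∈ s, f i - 1‖ = ‖f a * (∏ i ∈ s, f i - 1) + (f a - 1)‖ := by congr 1; ring
      _ ≤ ‖f a‖ * ‖∏ i ∈ s, f i - 1‖ + ‖f a - 1‖ :=
          (norm_add_le _ _).trans (by gcongr; exact norm_mul_le _ _)
      _ ≤ 1 * ∑ i ∈ s, ‖f i - 1‖ + ‖f a - 1‖ := by gcongr; exact hf a (mem_insert_self a s)
      _ = ‖f a - 1‖ + ∑ i ∈ s, ‖f i - 1‖ := by ring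

theorem Real.exists_tendsto_prod_Icc_of_mem_Icc {a : ℕ → ℝ}
    (ha : ∀ k, 1 ≤ k → a k ∈ Set.Icc 0 1) :
    ∃ L, Tendsto (fun j => ∏ k ∈ Icc 1 j, a k) atTop (𝓝 L) := by
  have ha' : ∀ j, ∀ k ∈ Icc 1 j, a k ∈ Set.Icc 0 1 := fun j k hk => ha k (mem_Icc.mp hk).1
  have hanti : Antitone fun j => ∏ k ∈ Icc 1 j, a k := fun i j hij =>
    prod_le_prod_of_subset_of_le_one (Icc_subset_Icc_right hij) (fun k hk => (ha' j k hk).1)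
      (fun k hk _ => (ha' j k hk).2)
  have hbdd : BddBelow (Set.range fun j => ∏ k ∈ Icc 1 j, a k) :=
    ⟨0, Set.forall_mem_range.mpr fun j => prod_nonneg fun k hk => (ha' j k hk).1⟩
  exact ⟨_, tendsto_atTop_ciInf hanti hbdd⟩

theorem Complex.norm_le_one_of_mem_Icc {z : ℂ} (hz : z ∈ Set.Icc 0 1) : ‖z‖ ≤ 1 := by
  have h : ((‖z‖ : ℝ) : ℂ) ≤ (1 : ℝ) := by
    rw [Complex.norm_of_nonneg' hz.1, Complex.ofReal_one]
    exact hz.2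
  exact_mod_cast h

theorem Complex.exists_tendsto_prod_Icc_of_mem_Icc {z : ℕ → ℂ}
    (hz : ∀ k, 1 ≤ k → z k ∈ Set.Icc 0 1) :
    ∃ L, 0 ≤ L ∧ Tendsto (fun j => ∏ k ∈ Icc 1 j, z k) atTop (𝓝 L) := by
  have hre : ∀ k, 1 ≤ k → z k = (z k).re := fun k hk => Complex.eq_re_of_ofReal_le (hz k hk).1
  have hre_mem : ∀ k, 1 ≤ k → (z k).re ∈ Set.Icc 0 1 := fun k hk =>
    ⟨(Complex.le_def.mp (hz k hk).1).1, (Complex.le_def.mp (hz k hk).2).1⟩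
  obtain ⟨L, hL⟩ := Real.exists_tendsto_prod_Icc_of_mem_Icc hre_mem
  have hprod : ∀ j, ∏ k ∈ Icc 1 j, z k = ((∏ k ∈ Icc 1 j, (z k).re : ℝ) : ℂ) := fun j => by
    rw [Complex.ofReal_prod]
    exact prod_congr rfl fun k hk => hre k (mem_Icc.mp hk).1
  refine ⟨L, Complex.zero_le_real.mpr (ge_of_tendsto' hL fun j => ?_), ?_⟩
  · exact prod_nonneg fun k hk => (hre_mem k (mem_Icc.mp hk).1).1
  · simpa only [hprod] using hL.ofReal

theorem sum_Icc_two_zpow_neg_sub_one (j : ℕ) :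
    ∑ k ∈ Icc 1 j, (2 : ℝ) ^ (-(k : ℤ) - 1) = 1 / 2 - 2 ^ (-(j : ℤ) - 1) := by
  induction j with
  | zero => simp
  | succ j ih =>
    rw [sum_Icc_succ_top (Nat.le_add_left 1 j), ih,
      show -((j + 1 : ℕ) : ℤ) - 1 = (-(j : ℤ) - 1) - 1 by push_cast; ring,
      zpow_sub_one₀ two_ne_zero (-(j : ℤ) - 1)]
    ring

theorem posdef_infinite_product_general {G : Type*} [Group G]
    (φ : ℕ → G → ℂ) (δ : ℝ)
    (hpd : ∀ k, 1 ≤ k → IsPosDefFn (φ k))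
    (hone : ∀ k, 1 ≤ k → φ k 1 = 1)
    (hreal : ∀ k, 1 ≤ k → ∀ g : G, (φ k g).im = 0 ∧ 0 ≤ (φ k g).re)
    (K : ℕ → Finset G) (hKmono : Monotone K)
    (hsmall : ∀ k, 1 ≤ k → ∀ g ∈ K k, ‖φ k g - 1‖ ≤ 2 ^ (-(k : ℤ) - 1) * δ ^ 2) :
    ∃ Φ : G → ℂ,
      (∀ g : G, Filter.Tendsto (fun j : ℕ => ∏ k ∈ Finset.Icc 1 j, φ k g)
        Filter.atTop (nhds (Φ g))) ∧
      IsPosDefFn Φ ∧ Φ 1 = 1 ∧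
      (∀ g : G, (Φ g).im = 0 ∧ 0 ≤ (Φ g).re) ∧
      (∀ g ∈ K 1, ‖Φ g - 1‖ ≤ δ ^ 2 / 2) := by
  have hmem : ∀ k, 1 ≤ k → ∀ g, φ k g ∈ Set.Icc 0 1 := fun k hk g =>
    (hpd k hk).mem_Icc_of_nonneg (hone k hk)
      (Complex.nonneg_iff.mpr ⟨(hreal k hk g).2, (hreal k hk g).1.symm⟩)
  choose Φ hΦ_nonneg hconv using fun g =>
    Complex.exists_tendsto_prod_Icc_of_mem_Icc fun k hk => hmem k hk g
  refine ⟨Φ, hconv, ?_, ?_, fun g => ?_, fun g hg => ?_⟩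
  · refine IsPosDefFn.of_tendsto (fun j => ?_) hconv
    simpa only [← Finset.prod_apply] using IsPosDefFn.prod _ fun k hk => hpd k (mem_Icc.mp hk).1
  · refine tendsto_nhds_unique (hconv 1) (tendsto_const_nhds.congr fun j => ?_)
    exact (prod_eq_one fun k hk => hone k (mem_Icc.mp hk).1).symm
  · exact ⟨(Complex.nonneg_iff.mp (hΦ_nonneg g)).2.symm, (Complex.nonneg_iff.mp (hΦ_nonneg g)).1⟩
  · refine le_of_tendsto' ((hconv g).sub_const 1).norm fun j => ?_
    calc ‖∏ k ∈ Icc 1 j, φ k g - 1‖ ≤ ∑ k ∈ Icc 1 j, ‖φ k g - 1‖ :=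
          norm_prod_sub_one_le_sum_norm_sub_one _ fun k hk =>
            Complex.norm_le_one_of_mem_Icc (hmem k (mem_Icc.mp hk).1 g)
      _ ≤ ∑ k ∈ Icc 1 j, (2 : ℝ) ^ (-(k : ℤ) - 1) * δ ^ 2 := sum_le_sum fun k hk =>
          hsmall k (mem_Icc.mp hk).1 g (hKmono (mem_Icc.mp hk).1 hg)
      _ ≤ δ ^ 2 / 2 := by
          rw [← sum_mul, sum_Icc_two_zpow_neg_sub_one]
          nlinarith [sq_nonneg δ, zpow_pos (two_pos : (0 : ℝ) < 2) (-(j : ℤ) - 1)]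

theorem posdef_infinite_product {G : Type*} [Group G] [Countable G]
    (φ : ℕ → G → ℂ) (δ : ℝ) (hδ : 0 < δ)
    (hpd : ∀ k, 1 ≤ k → IsPosDefFn (φ k))
    (hone : ∀ k, 1 ≤ k → φ k 1 = 1)
    (hreal : ∀ k, 1 ≤ k → ∀ g : G, (φ k g).im = 0 ∧ 0 ≤ (φ k g).re)
    (K : ℕ → Finset G) (hKmono : Monotone K)
    (hKexh : ∀ g : G, ∃ k, g ∈ K k)
    (hsmall : ∀ k, 1 ≤ k → ∀ g ∈ K k, ‖φ k g - 1‖ ≤ 2 ^ (-(k : ℤ) - 1) * δ ^ 2) :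
    ∃ Φ : G → ℂ,
      (∀ g : G, Filter.Tendsto (fun j : ℕ => ∏ k ∈ Finset.Icc 1 j, φ k g)
        Filter.atTop (nhds (Φ g))) ∧
      IsPosDefFn Φ ∧ Φ 1 = 1 ∧
      (∀ g : G, (Φ g).im = 0 ∧ 0 ≤ (Φ g).re) ∧
      (∀ g ∈ K 1, ‖Φ g - 1‖ ≤ δ ^ 2 / 2) :=
  posdef_infinite_product_general φ δ hpd hone hreal K hKmono hsmall
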